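/- ZLPostQAL = NQAL ∪ coNQAL: a language L ⊆ Σ* is recognized with error bound 0 by some Latvian RT-PostQFA if and only if either L is of the form {w : f^a(w) > 0} for some RT-QFA, or the complement of L is of that form. -/

import Mathlib

noncomputable section

/-- The input alphabet extended with the two endmarkers `¢` and `$`. -/
inductive ESym (α : Type) : Type where
  | cent : ESym α
  | dollar : ESym α
  | letter : α → ESym α

/-- The diagonal 0-1 projection matrix supported on a set of states. -/
def projM {m : ℕ} (S : Finset (Fin m)) : Matrix (Fin m) (Fin m) ℂ :=
  Matrix.diagonal (fun i => if i ∈ S then 1 else 0)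

/-- The density matrix obtained by applying, in order, the Kraus families for
`¢`, the letters of `w`, and `$` to the initial density matrix `|q₁⟩⟨q₁|`. -/
def qRun {α : Type} {n : ℕ} {k : ESym α → ℕ}
    (E : ∀ σ : ESym α, Fin (k σ) → Matrix (Fin (n + 1)) (Fin (n + 1)) ℂ)
    (w : List α) : Matrix (Fin (n + 1)) (Fin (n + 1)) ℂ :=
  (ESym.cent :: (w.map ESym.letter ++ [ESym.dollar])).foldl
    (fun ρ σ => ∑ i : Fin (k σ), E σ i * ρ * (E σ i).conjTranspose)
    (Matrix.single 0 0 1)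

/-- A real-time quantum finite automaton with postselection (RT-PostQFA). -/
structure PostQFA (α : Type) where
  n : ℕ
  k : ESym α → ℕ
  E : ∀ σ : ESym α, Fin (k σ) → Matrix (Fin (n + 1)) (Fin (n + 1)) ℂ
  kraus : ∀ σ : ESym α, ∑ i : Fin (k σ), (E σ i).conjTranspose * E σ i = 1
  Qpa : Finset (Fin (n + 1))
  Qpr : Finset (Fin (n + 1))
  disj : Disjoint Qpa Qpr
  postPos : ∀ w : List α,
    0 < ((projM Qpa * qRun E w).trace).re + ((projM Qpr * qRun E w).trace).re

/-- Acceptance probability before postselection. -/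
def PostQFA.pacc {α : Type} (M : PostQFA α) (w : List α) : ℝ :=
  ((projM M.Qpa * qRun M.E w).trace).re

/-- Rejection probability before postselection. -/
def PostQFA.prej {α : Type} (M : PostQFA α) (w : List α) : ℝ :=
  ((projM M.Qpr * qRun M.E w).trace).re

/-- Normalized acceptance probability of an RT-PostQFA. -/
def PostQFA.fa {α : Type} (M : PostQFA α) (w : List α) : ℝ :=
  M.pacc w / (M.pacc w + M.prej w)

/-- Recognition of a language with error bound `ε`. -/
def PostQFA.Recognizes {α : Type} (M : PostQFA α) (L : Set (List α)) (ε : ℝ) : Prop :=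
  ∀ w : List α, (w ∈ L → 1 - ε ≤ M.fa w) ∧ (w ∉ L → M.fa w ≤ ε)

/-- The class of languages recognized by RT-PostQFAs with bounded error. -/
def PostQAL {α : Type} (L : Set (List α)) : Prop :=
  ∃ (M : PostQFA α) (ε : ℝ), 0 ≤ ε ∧ ε < 1 / 2 ∧ M.Recognizes L ε

/-- Recognition with zero error: `fa = 1` on members, `fa = 0` on non-members. -/
def PostQFA.RecognizesZero {α : Type} (M : PostQFA α) (L : Set (List α)) : Prop :=
  ∀ w : List α, (w ∈ L → M.fa w = 1) ∧ (w ∉ L → M.fa w = 0)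

/-- The class of languages recognized by RT-PostQFAs with zero error. -/
def ZPostQAL {α : Type} (L : Set (List α)) : Prop :=
  ∃ M : PostQFA α, M.RecognizesZero L

/-- A standard real-time quantum finite automaton (RT-QFA). -/
structure QFA (α : Type) where
  n : ℕ
  k : ESym α → ℕ
  E : ∀ σ : ESym α, Fin (k σ) → Matrix (Fin (n + 1)) (Fin (n + 1)) ℂ
  kraus : ∀ σ : ESym α, ∑ i : Fin (k σ), (E σ i).conjTranspose * E σ i = 1
  Qa : Finset (Fin (n + 1))

/-- Acceptance probability of an RT-QFA. -/
def QFA.fa {α : Type} (M : QFA α) (w : List α) : ℝ :=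
  ((projM M.Qa * qRun M.E w).trace).re

/-- The flag of a Latvian postselection automaton: accept (`A`) or reject (`R`)
with certainty when the postselection probability is zero. -/
inductive PostFlag : Type where
  | A : PostFlag
  | R : PostFlag
deriving DecidableEq

/-- A Latvian RT-PostQFA: an RT-PostQFA without the positivity requirement,
together with a flag `τ ∈ {A, R}`. -/
structure LPostQFA (α : Type) where
  n : ℕ
  k : ESym α → ℕ
  E : ∀ σ : ESym α, Fin (k σ) → Matrix (Fin (n + 1)) (Fin (n + 1)) ℂ
  kraus : ∀ σ : ESym α, ∑ i : Fin (k σ), (E σ i).conjTranspose * E σ i = 1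
  Qpa : Finset (Fin (n + 1))
  Qpr : Finset (Fin (n + 1))
  disj : Disjoint Qpa Qpr
  tau : PostFlag

/-- Acceptance probability before postselection. -/
def LPostQFA.pacc {α : Type} (M : LPostQFA α) (w : List α) : ℝ :=
  ((projM M.Qpa * qRun M.E w).trace).re

/-- Rejection probability before postselection. -/
def LPostQFA.prej {α : Type} (M : LPostQFA α) (w : List α) : ℝ :=
  ((projM M.Qpr * qRun M.E w).trace).re

/-- Acceptance probability of a Latvian RT-PostQFA. -/
def LPostQFA.fa {α : Type} (M : LPostQFA α) (w : List α) : ℝ :=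
  if 0 < M.pacc w + M.prej w then M.pacc w / (M.pacc w + M.prej w)
  else if M.tau = PostFlag.A then 1 else 0

/-- Recognition of a language with error bound `ε`. -/
def LPostQFA.Recognizes {α : Type} (M : LPostQFA α) (L : Set (List α)) (ε : ℝ) : Prop :=
  ∀ w : List α, (w ∈ L → 1 - ε ≤ M.fa w) ∧ (w ∉ L → M.fa w ≤ ε)

/-- Recognition with zero error: `fa = 1` on members, `fa = 0` on non-members. -/
def LPostQFA.RecognizesZero {α : Type} (M : LPostQFA α) (L : Set (List α)) : Prop :=
  ∀ w : List α, (w ∈ L → M.fa w = 1) ∧ (w ∉ L → M.fa w = 0)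

/-!
The run of an automaton stays a density matrix, so `p^a` and `p^r` are nonnegative. For a
zero-error Latvian automaton with flag `R` this makes `f^a(w) = 0` equivalent to `p^a(w) = 0`,
so `L = {w | p^a(w) > 0}`, the language of the RT-QFA accepting in `Q_pa`; with flag `A`,
`f^a(w) = 1` is equivalent to `p^r(w) = 0`, so `Lᶜ = {w | p^r(w) > 0}`. Conversely an RT-QFA
with accepting set `Q_a` becomes a zero-error Latvian automaton by postselecting on
`Q_pa = Q_a, Q_pr = ∅` with flag `R`, or on `Q_pa = ∅, Q_pr = Q_a` with flag `A`.
-/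

open scoped ComplexOrder Matrix

section KrausRun

variable {m R : Type*} [Fintype m] [Ring R] [PartialOrder R] [StarRing R] [AddLeftMono R]

lemma Matrix.PosSemidef.sum_mul_mul_conjTranspose {ι : Type*} [Fintype ι]
    {ρ : Matrix m m R} (hρ : ρ.PosSemidef) (E : ι → Matrix m m R) :
    (∑ i, E i * ρ * (E i)ᴴ).PosSemidef :=
  Matrix.posSemidef_sum _ fun i _ => hρ.mul_mul_conjTranspose_same (E i)

lemma Matrix.PosSemidef.foldl_kraus {β : Type*} {ι : β → Type*} [∀ σ, Fintype (ι σ)]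
    (E : ∀ σ, ι σ → Matrix m m R) (l : List β) {ρ : Matrix m m R} (hρ : ρ.PosSemidef) :
    (l.foldl (fun ρ σ => ∑ i, E σ i * ρ * (E σ i)ᴴ) ρ).PosSemidef := by
  induction l generalizing ρ with
  | nil => exact hρ
  | cons σ l ih => exact ih (hρ.sum_mul_mul_conjTranspose (E σ))

end KrausRun

lemma qRun_posSemidef {α : Type} {n : ℕ} {k : ESym α → ℕ}
    (E : ∀ σ : ESym α, Fin (k σ) → Matrix (Fin (n + 1)) (Fin (n + 1)) ℂ) (w : List α) :
    (qRun E w).PosSemidef := by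
  have hinit : (Matrix.single (0 : Fin (n + 1)) 0 (1 : ℂ)).PosSemidef := by
    simpa [Matrix.single_eq_single_vecMulVec_single] using
      Matrix.posSemidef_vecMulVec_self_star (Pi.single (0 : Fin (n + 1)) (1 : ℂ))
  exact Matrix.PosSemidef.foldl_kraus E _ hinit

lemma trace_projM_mul {m : ℕ} (S : Finset (Fin m)) (ρ : Matrix (Fin m) (Fin m) ℂ) :
    (projM S * ρ).trace = ∑ i ∈ S, ρ i i := by
  simp [projM, Matrix.trace, Matrix.diagonal_mul, Finset.sum_ite_mem]

lemma re_trace_projM_mul_nonneg {m : ℕ} (S : Finset (Fin m)) {ρ : Matrix (Fin m) (Fin m) ℂ}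
    (hρ : ρ.PosSemidef) : 0 ≤ ((projM S * ρ).trace).re := by
  rw [trace_projM_mul, Complex.re_sum]
  exact Finset.sum_nonneg fun i _ => (Complex.nonneg_iff.1 hρ.diag_nonneg).1

lemma projM_empty {m : ℕ} : projM (∅ : Finset (Fin m)) = 0 := by
  simp [projM]

namespace LPostQFA

variable {α : Type} (M : LPostQFA α) (w : List α)

def toQFA (Q : Finset (Fin (M.n + 1))) : QFA α := ⟨M.n, M.k, M.E, M.kraus, Q⟩

lemma pacc_nonneg : 0 ≤ M.pacc w :=
  re_trace_projM_mul_nonneg _ (qRun_posSemidef _ _)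

lemma prej_nonneg : 0 ≤ M.prej w :=
  re_trace_projM_mul_nonneg _ (qRun_posSemidef _ _)

lemma fa_eq_zero_iff_pacc_eq_zero (hτ : M.tau = .R) : M.fa w = 0 ↔ M.pacc w = 0 := by
  have hpa := M.pacc_nonneg w
  have hpr := M.prej_nonneg w
  by_cases hpost : 0 < M.pacc w + M.prej w
  · rw [fa, if_pos hpost, div_eq_zero_iff, or_iff_left hpost.ne']
  · rw [fa, if_neg hpost, hτ]
    simp only [reduceCtorEq, if_false, true_iff]
    linarith

lemma fa_eq_one_iff_prej_eq_zero (hτ : M.tau = .A) : M.fa w = 1 ↔ M.prej w = 0 := by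
  have hpa := M.pacc_nonneg w
  have hpr := M.prej_nonneg w
  by_cases hpost : 0 < M.pacc w + M.prej w
  · rw [fa, if_pos hpost, div_eq_one_iff_eq hpost.ne']
    constructor <;> intro h <;> linarith
  · rw [fa, if_neg hpost, hτ]
    simp only [if_true, true_iff]
    linarith

variable {M} {L : Set (List α)}

lemma RecognizesZero.eq_setOf_pacc_pos (hM : M.RecognizesZero L) (hτ : M.tau = .R) :
    L = {w | 0 < M.pacc w} := by
  ext w
  rw [Set.mem_ofPred_eq, (M.pacc_nonneg w).lt_iff_ne', ← not_iff_not, not_not,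
    ← M.fa_eq_zero_iff_pacc_eq_zero w hτ]
  by_cases hw : w ∈ L <;> simp [hw, hM w]

lemma RecognizesZero.compl_eq_setOf_prej_pos (hM : M.RecognizesZero L) (hτ : M.tau = .A) :
    Lᶜ = {w | 0 < M.prej w} := by
  ext w
  rw [Set.mem_ofPred_eq, (M.prej_nonneg w).lt_iff_ne', Set.mem_compl_iff, not_iff_not,
    ← M.fa_eq_one_iff_prej_eq_zero w hτ]
  by_cases hw : w ∈ L <;> simp [hw, hM w]

end LPostQFA

namespace QFA

variable {α : Type} (M : QFA α) (w : List α)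

def latvianAccept : LPostQFA α :=
  ⟨M.n, M.k, M.E, M.kraus, M.Qa, ∅, Finset.disjoint_empty_right _, .R⟩

def latvianReject : LPostQFA α :=
  ⟨M.n, M.k, M.E, M.kraus, ∅, M.Qa, Finset.disjoint_empty_left _, .A⟩

lemma latvianAccept_fa : M.latvianAccept.fa w = if 0 < M.fa w then 1 else 0 := by
  have hprej : M.latvianAccept.prej w = 0 := by
    rw [LPostQFA.prej, latvianAccept, projM_empty, zero_mul, Matrix.trace_zero, Complex.zero_re]
  have hpacc : M.latvianAccept.pacc w = M.fa w := rfl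
  by_cases h : 0 < M.fa w
  · rw [LPostQFA.fa, hpacc, hprej, add_zero, if_pos h, if_pos h, div_self h.ne']
  · rw [LPostQFA.fa, hpacc, hprej, add_zero, if_neg h, if_neg h]
    rfl

lemma latvianReject_fa : M.latvianReject.fa w = if 0 < M.fa w then 0 else 1 := by
  have hpacc : M.latvianReject.pacc w = 0 := by
    rw [LPostQFA.pacc, latvianReject, projM_empty, zero_mul, Matrix.trace_zero, Complex.zero_re]
  have hprej : M.latvianReject.prej w = M.fa w := rfl
  by_cases h : 0 < M.fa w
  · rw [LPostQFA.fa, hpacc, hprej, zero_add, if_pos h, if_pos h, zero_div]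
  · rw [LPostQFA.fa, hpacc, hprej, zero_add, if_neg h, if_neg h]
    rfl

lemma latvianAccept_recognizesZero : M.latvianAccept.RecognizesZero {w | 0 < M.fa w} :=
  fun w => ⟨fun hw => by simp_all [latvianAccept_fa], fun hw => by simp_all [latvianAccept_fa]⟩

lemma latvianReject_recognizesZero : M.latvianReject.RecognizesZero {w | 0 < M.fa w}ᶜ :=
  fun w => ⟨fun hw => by simp_all [latvianReject_fa], fun hw => by simp_all [latvianReject_fa]⟩

end QFA

theorem ZLPostQAL_eq_NQAL_union_coNQAL_general {α : Type} (L : Set (List α)) :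
    (∃ M : LPostQFA α, M.RecognizesZero L) ↔
      ((∃ M : QFA α, L = {w : List α | 0 < M.fa w}) ∨
        (∃ M : QFA α, Lᶜ = {w : List α | 0 < M.fa w})) := by
  constructor
  · rintro ⟨M, hM⟩
    cases hτ : M.tau
    · exact .inr ⟨M.toQFA M.Qpr, hM.compl_eq_setOf_prej_pos hτ⟩
    · exact .inl ⟨M.toQFA M.Qpa, hM.eq_setOf_pacc_pos hτ⟩
  · rintro (⟨M, rfl⟩ | ⟨M, hL⟩)
    · exact ⟨M.latvianAccept, M.latvianAccept_recognizesZero⟩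
    · rw [← compl_compl L, hL]
      exact ⟨M.latvianReject, M.latvianReject_recognizesZero⟩

/-- `ZLPostQAL = NQAL ∪ coNQAL`: a language is recognized with zero error by some
Latvian RT-PostQFA iff it, or its complement, is recognized with cutpoint zero by
some RT-QFA. -/
theorem ZLPostQAL_eq_NQAL_union_coNQAL {α : Type} [Fintype α] (L : Set (List α)) :
    (∃ M : LPostQFA α, M.RecognizesZero L) ↔
      ((∃ M : QFA α, L = {w : List α | 0 < M.fa w}) ∨
        (∃ M : QFA α, Lᶜ = {w : List α | 0 < M.fa w})) :=
  ZLPostQAL_eq_NQAL_union_coNQAL_general L
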